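/- arXiv:1911.07458 — 2 statements merged into one kernel-verified Lean document; each statement's English description precedes it below -/
import Mathlib

section
/- Let f(X) = 1 + ∑_{α≠0}(f_α/α!)X^α be a formal power series in N commuting variables over ℚ with constant term 1. Then its multiplicative reciprocal is 1/f(X) = 1 + ∑_{α≠0}(h_α/α!)X^α where for each α ≠ 0: h_α = ∑_{π ∈ P_{[α]}} (−1)^{|π|} |π|! ∏_{Γ∈π} f_{#Γ}, with P_{[α]} the set partitions of [α] = {(i,a): 1 ≤ a ≤ α_i} and #Γ the multi-index counting elements (i,a) ∈ Γ for each i. -/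
open scoped Classical

/-- The set of leaf labels `[α] = {(i,a) : 1 ≤ a ≤ α_i}` of a multi-index `α`. -/
abbrev Leaves {N : ℕ} (α : Fin N →₀ ℕ) : Type := Σ i : Fin N, Fin (α i)

/-- `#Γ`: the multi-index counting, for each `i`, the elements of `Γ ⊆ [α]` of the form
`(i,a)`. -/
noncomputable def blockIndex {N : ℕ} {α : Fin N →₀ ℕ} (Γ : Finset (Leaves α)) : Fin N →₀ ℕ :=
  Finsupp.equivFunOnFinite.symm fun i => (Γ.filter fun x => x.1 = i).card

/-- `α! = ∏ αᵢ!` as a rational number. -/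
def mfactorial {N : ℕ} (α : Fin N →₀ ℕ) : ℚ := α.prod fun _ n => (n.factorial : ℚ)

/-!
Write `f_γ = γ! [X^γ] f` and likewise `g_γ`. For `S ⊆ [α]` with `#S = γ`, the number of subsets
`B ⊆ S` with `#B = β` is `γ! / (β! (γ - β)!)`, so `f g = 1` says exactly that `S ↦ g_{#S}` is the
inverse of `B ↦ f_{#B}` for the subset convolution `(v ⋆ w)(S) = ∑_{B ⊆ S} v(B) w(S \ B)`.
Such an inverse is unique, and the partition sum `∑_π (-1)^{|π|} |π|! ∏_{Γ ∈ π} v(Γ)` is one: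
a partition of `S` with a marked block `B` is the same as a nonempty `B ⊆ S` together with a
partition of `S \ B`, and the choice of the mark accounts for the factor `|π|`.
-/

open Finset

namespace Finpartition

variable {ι : Type*} [DecidableEq ι] {s Γ : Finset ι}

lemma parts_avoid_of_mem (P : Finpartition s) (hΓ : Γ ∈ P.parts) :
    (P.avoid Γ).parts = P.parts.erase Γ := by
  ext c
  rw [mem_avoid, mem_erase]
  constructor
  · rintro ⟨d, hd, hdΓ, rfl⟩
    have hne : d ≠ Γ := by rintro rfl; exact hdΓ le_rfl
    have hdis : Disjoint d Γ := P.disjoint hd hΓ hne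
    rw [hdis.sdiff_eq_left]
    exact ⟨hne, hd⟩
  · rintro ⟨hne, hc⟩
    have hdis : Disjoint c Γ := P.disjoint hc hΓ hne
    exact ⟨c, hc, fun hle => P.ne_bot hc (hdis.eq_bot_of_le hle), hdis.sdiff_eq_left⟩

lemma extendOfLE_avoid (P : Finpartition s) (hΓ : Γ ∈ P.parts) :
    (P.avoid Γ).extendOfLE sdiff_le = P := by
  have hlt : s \ Γ < s := sdiff_lt (P.le hΓ) (P.ne_bot hΓ)
  ext1
  rw [parts_extendOfLE_of_lt _ hlt, Finset.sdiff_sdiff_eq_self (P.le hΓ),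
    parts_avoid_of_mem P hΓ, insert_erase hΓ]

lemma mem_parts_extendOfLE_sdiff (P : Finpartition (s \ Γ)) (hΓs : Γ ⊆ s) (hΓ : Γ.Nonempty) :
    Γ ∈ (P.extendOfLE sdiff_le).parts := by
  rw [parts_extendOfLE_of_lt _ (sdiff_lt hΓs hΓ.ne_empty), Finset.sdiff_sdiff_eq_self hΓs]
  exact mem_insert_self _ _

lemma avoid_extendOfLE (P : Finpartition (s \ Γ)) (hΓs : Γ ⊆ s) (hΓ : Γ.Nonempty) :
    (P.extendOfLE sdiff_le).avoid Γ = P := by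
  have hlt : s \ Γ < s := sdiff_lt hΓs hΓ.ne_empty
  have hnotMem : Γ ∉ P.parts := fun h => by
    obtain ⟨x, hx⟩ := hΓ
    exact (mem_sdiff.1 (P.le h hx)).2 hx
  ext1
  rw [parts_avoid_of_mem _ (mem_parts_extendOfLE_sdiff P hΓs hΓ), parts_extendOfLE_of_lt _ hlt,
    Finset.sdiff_sdiff_eq_self hΓs, erase_insert hnotMem]

lemma sum_sigma_parts_avoid {M : Type*} [AddCommMonoid M] (s : Finset ι)
    (F : (B : Finset ι) → Finpartition (s \ B) → M) :
    ∑ x ∈ univ.sigma fun P : Finpartition s => P.parts, F x.2 (x.1.avoid x.2) =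
      ∑ x ∈ (s.powerset.erase ∅).sigma fun B => (univ : Finset (Finpartition (s \ B))),
        F x.1 x.2 := by
  refine sum_nbij' (fun x => ⟨x.2, x.1.avoid x.2⟩) (fun x => ⟨x.2.extendOfLE sdiff_le, x.1⟩)
    ?_ ?_ ?_ ?_ (fun _ _ => rfl) <;> simp only [mem_sigma, mem_univ, true_and, and_true, mem_erase,
      mem_powerset, ne_eq]
  · rintro ⟨P, Γ⟩ hΓ
    exact ⟨P.ne_bot hΓ, P.le hΓ⟩
  · rintro ⟨B, P⟩ ⟨hB, hBs⟩
    exact mem_parts_extendOfLE_sdiff P hBs (nonempty_iff_ne_empty.2 hB)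
  · rintro ⟨P, Γ⟩ hΓ
    exact Sigma.ext (extendOfLE_avoid P hΓ) HEq.rfl
  · rintro ⟨B, P⟩ ⟨hB, hBs⟩
    exact Sigma.ext rfl (heq_of_eq (avoid_extendOfLE P hBs (nonempty_iff_ne_empty.2 hB)))

end Finpartition

section PartitionSum

variable {ι R : Type*} [DecidableEq ι] [CommRing R]

def partitionWeight {s : Finset ι} (v : Finset ι → R) (P : Finpartition s) : R :=
  (-1) ^ #P.parts * ((#P.parts).factorial : R) * ∏ Γ ∈ P.parts, v Γ

def partitionSum (v : Finset ι → R) (s : Finset ι) : R :=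
  ∑ P : Finpartition s, partitionWeight v P

def IsSubsetConvInverse (v w : Finset ι → R) : Prop :=
  ∀ s, ∑ B ∈ s.powerset, v B * w (s \ B) = if s = ∅ then 1 else 0

lemma IsSubsetConvInverse.unique {v w w' : Finset ι → R} (hw : IsSubsetConvInverse v w)
    (hw' : IsSubsetConvInverse v w') : w = w' := by
  have hunit : IsUnit (v ∅) := .of_mul_eq_one (w ∅) (by simpa using hw ∅)
  have split : ∀ u : Finset ι → R, ∀ s, ∑ B ∈ s.powerset, v B * u (s \ B) =
      v ∅ * u s + ∑ B ∈ s.powerset.erase ∅, v B * u (s \ B) := fun u s => by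
    rw [← add_sum_erase _ _ (empty_mem_powerset s), sdiff_empty]
  funext s
  induction s using Finset.strongInduction with
  | H s ih =>
    have hlower : ∑ B ∈ s.powerset.erase ∅, v B * w (s \ B) =
        ∑ B ∈ s.powerset.erase ∅, v B * w' (s \ B) := by
      refine sum_congr rfl fun B hB => ?_
      obtain ⟨hB, hBs⟩ := mem_erase.1 hB
      rw [ih _ (sdiff_ssubset (mem_powerset.1 hBs) (nonempty_iff_ne_empty.2 hB))]
    have heq := (hw s).trans (hw' s).symm
    rw [split, split, hlower, add_left_inj] at heq
    exact hunit.mul_left_cancel heq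

variable (v : Finset ι → R)

lemma partitionSum_empty : partitionSum v ∅ = 1 := by
  have : Unique (Finpartition (∅ : Finset ι)) :=
    inferInstanceAs (Unique (Finpartition (⊥ : Finset ι)))
  rw [partitionSum, Fintype.sum_unique, partitionWeight, Finpartition.parts_eq_empty_iff.2 rfl]
  simp

lemma sum_parts_mul_partitionWeight_avoid {s : Finset ι} (hs : s.Nonempty) (P : Finpartition s) :
    ∑ Γ ∈ P.parts, v Γ * partitionWeight v (P.avoid Γ) = -partitionWeight v P := by
  obtain ⟨k, hk⟩ : ∃ k, #P.parts = k + 1 :=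
    Nat.exists_eq_add_one.2 (card_pos.2 (P.parts_nonempty hs.ne_empty))
  calc ∑ Γ ∈ P.parts, v Γ * partitionWeight v (P.avoid Γ)
      = ∑ Γ ∈ P.parts, (-1) ^ k * (k.factorial : R) * ∏ Γ ∈ P.parts, v Γ := by
        refine sum_congr rfl fun Γ hΓ => ?_
        rw [partitionWeight, P.parts_avoid_of_mem hΓ, card_erase_of_mem hΓ, hk,
          Nat.add_sub_cancel, ← mul_prod_erase _ _ hΓ]
        ring
    _ = -partitionWeight v P := by
        rw [sum_const, hk, partitionWeight, hk, nsmul_eq_mul, Nat.factorial_succ]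
        push_cast
        ring

lemma sum_powerset_erase_mul_partitionSum {s : Finset ι} (hs : s.Nonempty) :
    ∑ B ∈ s.powerset.erase ∅, v B * partitionSum v (s \ B) = -partitionSum v s := by
  calc ∑ B ∈ s.powerset.erase ∅, v B * partitionSum v (s \ B)
      = ∑ x ∈ (s.powerset.erase ∅).sigma fun B => (univ : Finset (Finpartition (s \ B))),
          v x.1 * partitionWeight v x.2 := by
        simp only [partitionSum, mul_sum, sum_sigma]
    _ = ∑ P : Finpartition s, ∑ Γ ∈ P.parts, v Γ * partitionWeight v (P.avoid Γ) := by
        rw [← Finpartition.sum_sigma_parts_avoid s (fun B P => v B * partitionWeight v P),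
          sum_sigma]
    _ = -partitionSum v s := by
        simp only [sum_parts_mul_partitionWeight_avoid v hs, partitionSum, sum_neg_distrib]

lemma partitionSum_congr {v' : Finset ι → R} {s : Finset ι}
    (h : ∀ Γ : Finset ι, Γ.Nonempty → v Γ = v' Γ) : partitionSum v s = partitionSum v' s :=
  sum_congr rfl fun P _ => by
    rw [partitionWeight, partitionWeight,
      prod_congr rfl fun Γ hΓ => h Γ (P.nonempty_of_mem_parts hΓ)]

lemma isSubsetConvInverse_partitionSum (hv : v ∅ = 1) :
    IsSubsetConvInverse v (partitionSum v) := by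
  intro s
  rw [← add_sum_erase _ _ (empty_mem_powerset s), hv, one_mul, sdiff_empty]
  split_ifs with hs
  · simp [hs, partitionSum_empty]
  · rw [sum_powerset_erase_mul_partitionSum v (nonempty_iff_ne_empty.2 hs), add_neg_cancel]

end PartitionSum

lemma card_powerset_filter_card_fiber_eq {X ι : Type*} [DecidableEq X] [Fintype ι] [DecidableEq ι]
    (p : X → ι) (S : Finset X) (β : ι → ℕ) :
    #{B ∈ S.powerset | ∀ i, #{x ∈ B | p x = i} = β i} = ∏ i, (#{x ∈ S | p x = i}).choose (β i) := by
  have hfiber : ∀ t : ∀ i, Finset X, (∀ i, ∀ x ∈ t i, p x = i) →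
      ∀ i, {x ∈ univ.biUnion t | p x = i} = t i := fun t ht i => by
    ext x
    simp only [mem_filter, mem_biUnion, mem_univ, true_and]
    constructor
    · rintro ⟨⟨j, hj⟩, rfl⟩
      rwa [ht j x hj]
    · exact fun hx => ⟨⟨i, hx⟩, ht i x hx⟩
  simp_rw [← card_powersetCard, ← Fintype.card_piFinset]
  refine card_nbij' (fun B i => {x ∈ B | p x = i}) (fun t => univ.biUnion t) ?_ ?_ ?_ ?_
  · intro B hB
    simp only [mem_coe, mem_filter, mem_powerset, Fintype.mem_piFinset, mem_powersetCard] at hB ⊢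
    exact fun i => ⟨filter_subset_filter _ hB.1, hB.2 i⟩
  · intro t ht
    simp only [mem_coe, mem_filter, mem_powerset, Fintype.mem_piFinset, mem_powersetCard] at ht ⊢
    have hp : ∀ i, ∀ x ∈ t i, p x = i := fun i x hx => (mem_filter.1 ((ht i).1 hx)).2
    refine ⟨biUnion_subset.2 fun i _ => (ht i).1.trans (filter_subset _ _), fun i => ?_⟩
    rw [hfiber t hp, (ht i).2]
  · intro B _
    exact biUnion_filter_eq_of_maps_to fun _ _ => mem_univ _
  · intro t ht
    simp only [mem_coe, Fintype.mem_piFinset, mem_powersetCard] at ht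
    exact funext (hfiber t fun i x hx => (mem_filter.1 ((ht i).1 hx)).2)

section MultiIndex

variable {N : ℕ}

lemma mfactorial_eq_prod (γ : Fin N →₀ ℕ) : mfactorial γ = ∏ i, ((γ i).factorial : ℚ) :=
  Finsupp.prod_fintype _ _ fun _ => by simp

lemma mfactorial_zero : mfactorial (0 : Fin N →₀ ℕ) = 1 := by
  simp [mfactorial]

lemma mfactorial_ne_zero (γ : Fin N →₀ ℕ) : mfactorial γ ≠ 0 := by
  rw [mfactorial_eq_prod]
  exact prod_ne_zero_iff.2 fun i _ => Nat.cast_ne_zero.2 (Nat.factorial_ne_zero _)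

lemma mfactorial_add (β δ : Fin N →₀ ℕ) :
    mfactorial (β + δ) = (∏ i, ((β + δ) i).choose (β i) : ℚ) * mfactorial β * mfactorial δ := by
  simp only [mfactorial_eq_prod, ← prod_mul_distrib, Finsupp.add_apply]
  refine prod_congr rfl fun i _ => ?_
  rw [add_comm (β i), ← Nat.add_choose_mul_factorial_mul_factorial]
  push_cast
  ring

section BlockIndex

variable {α : Fin N →₀ ℕ}

lemma blockIndex_apply (B : Finset (Leaves α)) (i : Fin N) :
    blockIndex B i = #{x ∈ B | x.1 = i} := rfl

lemma blockIndex_univ : blockIndex (univ : Finset (Leaves α)) = α := by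
  ext i
  rw [blockIndex_apply, card_filter, Fintype.sum_sigma]
  simp [apply_ite card]

lemma blockIndex_eq_zero_iff {B : Finset (Leaves α)} : blockIndex B = 0 ↔ B = ∅ := by
  simp [DFunLike.ext_iff, blockIndex_apply, eq_empty_iff_forall_notMem]

lemma blockIndex_add_blockIndex_sdiff {B S : Finset (Leaves α)} (h : B ⊆ S) :
    blockIndex B + blockIndex (S \ B) = blockIndex S := by
  ext i
  rw [Finsupp.add_apply, blockIndex_apply, blockIndex_apply, blockIndex_apply,
    ← card_union_of_disjoint (disjoint_filter_filter disjoint_sdiff), ← filter_union,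
    union_sdiff_of_subset h]

lemma card_powerset_filter_blockIndex_eq (S : Finset (Leaves α)) (β : Fin N →₀ ℕ) :
    #{B ∈ S.powerset | blockIndex B = β} = ∏ i, (blockIndex S i).choose (β i) := by
  convert card_powerset_filter_card_fiber_eq Sigma.fst S β using 3
  · exact DFunLike.ext_iff
  · rfl

end BlockIndex

section ExpCoeff

open MvPowerSeries

def expCoeff (φ : MvPowerSeries (Fin N) ℚ) (γ : Fin N →₀ ℕ) : ℚ := mfactorial γ * coeff γ φ

lemma expCoeff_mul (f g : MvPowerSeries (Fin N) ℚ) (γ : Fin N →₀ ℕ) :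
    expCoeff (f * g) γ = ∑ p ∈ antidiagonal γ,
      (∏ i, (γ i).choose (p.1 i) : ℚ) * expCoeff f p.1 * expCoeff g p.2 := by
  rw [expCoeff, coeff_mul, mul_sum]
  refine sum_congr rfl fun p hp => ?_
  rw [← mem_antidiagonal.1 hp, mfactorial_add, expCoeff, expCoeff]
  ring

lemma expCoeff_one (γ : Fin N →₀ ℕ) : expCoeff 1 γ = if γ = 0 then 1 else 0 := by
  split_ifs with hγ <;> simp [expCoeff, coeff_one, hγ, mfactorial_zero]

variable {α : Fin N →₀ ℕ}

lemma sum_powerset_expCoeff_mul_expCoeff (f g : MvPowerSeries (Fin N) ℚ)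
    (S : Finset (Leaves α)) :
    ∑ B ∈ S.powerset, expCoeff f (blockIndex B) * expCoeff g (blockIndex (S \ B)) =
      expCoeff (f * g) (blockIndex S) := by
  have hmaps : ∀ B ∈ S.powerset, (blockIndex B, blockIndex (S \ B)) ∈ antidiagonal (blockIndex S) :=
    fun B hB => mem_antidiagonal.2 (blockIndex_add_blockIndex_sdiff (mem_powerset.1 hB))
  rw [expCoeff_mul, ← sum_fiberwise_of_maps_to hmaps]
  refine sum_congr rfl fun p hp => ?_
  have hfiber : {B ∈ S.powerset | (blockIndex B, blockIndex (S \ B)) = p} =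
      {B ∈ S.powerset | blockIndex B = p.1} := by
    refine filter_congr fun B hB => ⟨fun h => h ▸ rfl, fun h => Prod.ext h ?_⟩
    have hsum := (blockIndex_add_blockIndex_sdiff (mem_powerset.1 hB)).trans
      (mem_antidiagonal.1 hp).symm
    rw [h] at hsum
    exact add_left_cancel hsum
  rw [sum_congr rfl fun B hB => show _ = expCoeff f p.1 * expCoeff g p.2 by
      rw [← (mem_filter.1 hB).2], sum_const, hfiber,
    card_powerset_filter_blockIndex_eq, nsmul_eq_mul, Nat.cast_prod, mul_assoc]

lemma isSubsetConvInverse_expCoeff {f g : MvPowerSeries (Fin N) ℚ} (hfg : f * g = 1) :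
    IsSubsetConvInverse (fun B : Finset (Leaves α) => expCoeff f (blockIndex B))
      (fun S => expCoeff g (blockIndex S)) := by
  intro S
  rw [sum_powerset_expCoeff_mul_expCoeff, hfg, expCoeff_one]
  simp only [blockIndex_eq_zero_iff]

end ExpCoeff

end MultiIndex

/-- partition formula for the reciprocal of a multivariate power series with
constant term `1`.  If `f(X) = 1 + ∑_{α≠0} (f_α/α!) X^α` and `f·g = 1`, then
`g(X) = 1 + ∑_{α≠0} (h_α/α!) X^α` with
`h_α = ∑_{π ∈ P_{[α]}} (-1)^{|π|} |π|! ∏_{Γ ∈ π} f_{#Γ}`. -/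
theorem reciprocal_partition_formula {N : ℕ} (fc : (Fin N →₀ ℕ) → ℚ)
    (f g : MvPowerSeries (Fin N) ℚ)
    (hf : ∀ α, MvPowerSeries.coeff α f =
      if α = 0 then 1 else (mfactorial α)⁻¹ * fc α)
    (hfg : f * g = 1) :
    ∀ α : Fin N →₀ ℕ, α ≠ 0 →
      MvPowerSeries.coeff α g =
        (mfactorial α)⁻¹ *
          ∑ π : Finpartition (Finset.univ : Finset (Leaves α)),
            (-1 : ℚ) ^ π.parts.card * (π.parts.card.factorial : ℚ) *
              ∏ Γ ∈ π.parts, fc (blockIndex Γ) := by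
  intro α _
  have hf_block : ∀ Γ : Finset (Leaves α), Γ.Nonempty →
      expCoeff f (blockIndex Γ) = fc (blockIndex Γ) := fun Γ hΓ => by
    rw [expCoeff, hf, if_neg (blockIndex_eq_zero_iff.not.2 hΓ.ne_empty),
        mul_inv_cancel_left₀ (mfactorial_ne_zero _)]
  have hf_empty : expCoeff f (blockIndex (∅ : Finset (Leaves α))) = 1 := by
    rw [blockIndex_eq_zero_iff.2 rfl, expCoeff, hf, if_pos rfl, mfactorial_zero, one_mul]
  have key := congrFun ((isSubsetConvInverse_partitionSum _ hf_empty).unique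
    (isSubsetConvInverse_expCoeff hfg)) univ
  rw [partitionSum_congr _ hf_block, blockIndex_univ, expCoeff] at key
  rw [eq_inv_mul_iff_mul_eq₀ (mfactorial_ne_zero α)]
  exact key.symm
end

section
/- Let K be a commutative ring and let F be an N-tuple of formal power series in N free (non-commuting) indeterminates with F_i = X_i − ∑_{k≥2}∑_{κ∈[N]^k} H_{i,κ} X_κ. Then F has a two-sided compositional inverse G with G_i = X_i + ∑_{k≥2}∑_{κ∈[N]^k} G_{i,κ} X_κ, where G_{i,κ} = ∑_{T ∈ S⃗_{i,κ}} ∏_{v internal} H_{τ(v), μ⃗(v)}. Here S⃗_{i,κ} is the set of typed planar rooted trees with root of type i, leaves of types κ_1,…,κ_k read left to right, every internal vertex having at least two children, and μ⃗(v) is the tuple of types of the children of v in planar order. -/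
/-- Formal power series in `N` free (non-commuting) indeterminates with coefficients in `K`. -/
def FreeSeries (N : ℕ) (K : Type*) := List (Fin N) → K

/-- Multiplication of free power series, splitting words into prefix and suffix. -/
instance {N : ℕ} {K : Type*} [CommRing K] : Mul (FreeSeries N K) :=
  ⟨fun f g w => ∑ j ∈ Finset.range (w.length + 1), f (w.take j) * g (w.drop j)⟩

/-- The unit free power series. -/
instance {N : ℕ} {K : Type*} [CommRing K] : One (FreeSeries N K) :=
  ⟨fun w => if w = [] then 1 else 0⟩

/-- Composition of `N`-tuples of free power series (valid when the inner tuple has zero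
constant terms). -/
noncomputable def fcomp {N : ℕ} {K : Type*} [CommRing K]
    (F G : Fin N → FreeSeries N K) : Fin N → FreeSeries N K := fun i w =>
  ∑ j ∈ Finset.range (w.length + 1), ∑ γ : Fin j → Fin N,
    F i (List.ofFn γ) * (List.ofFn fun r => G (γ r)).prod w

/-- Typed planar rooted trees with vertex types in `{1,…,N}`: a tree is a typed leaf or a typed
vertex with an ordered (planar) list of subtrees. -/
inductive PTree (N : ℕ) : Type
  | leaf : Fin N → PTree N
  | node : Fin N → List (PTree N) → PTree N

/-- The type of the root of a planar tree. -/
def PTree.rootType {N : ℕ} : PTree N → Fin N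
  | .leaf j => j
  | .node j _ => j

/-- The word of leaf types of a planar tree, read from left to right. -/
def PTree.leafWord {N : ℕ} : PTree N → List (Fin N)
  | .leaf j => [j]
  | .node _ ts => ts.attach.flatMap fun t => PTree.leafWord t.1
decreasing_by
  have := List.sizeOf_lt_of_mem t.2
  simp only [PTree.node.sizeOf_spec]
  omega

/-- A planar tree is proper if each internal vertex has at least two children. -/
def PTree.Proper {N : ℕ} : PTree N → Prop
  | .leaf _ => True
  | .node _ ts => 2 ≤ ts.length ∧ ∀ t ∈ ts, PTree.Proper t

/-- The planar `H`-energy `∏_{v internal} H_{τ(v), μ⃗(v)}` of a planar tree, where `μ⃗(v)` is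
the tuple of types of the children of `v` in planar order. -/
def PTree.energy {N : ℕ} {K : Type*} [CommRing K]
    (H : Fin N → List (Fin N) → K) : PTree N → K
  | .leaf _ => 1
  | .node j ts => H j (ts.map PTree.rootType) * (ts.attach.map fun t => PTree.energy H t.1).prod
decreasing_by
  have := List.sizeOf_lt_of_mem t.2
  simp only [PTree.node.sizeOf_spec]
  omega

/-- The sum `∑_{T ∈ S⃗_{i,κ}} E_H(T)` of planar `H`-energies over all proper typed planar
rooted trees with root type `i` and leaf word `κ` (a finite set of trees). -/
noncomputable def ptreeSum {N : ℕ} {K : Type*} [CommRing K]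
    (H : Fin N → List (Fin N) → K) (i : Fin N) (w : List (Fin N)) : K :=
  ∑ᶠ (T : PTree N) (_ : T.Proper ∧ T.rootType = i ∧ T.leafWord = w), T.energy H

/-!
Write `F = X - H`. Cutting a proper planar tree at its root into the root type and the ordered
forest of its subtrees shows that the tuple `G` of tree sums solves `G = X + H(G)`, that is,
`F ∘ G = X`. Substitution of series without constant term is multiplicative and associative, so
the same argument applied to `G = X - (X - G)` gives a right inverse `G'` of `G`; then
`G' = (F ∘ G) ∘ G' = F ∘ (G ∘ G') = F`, hence `G ∘ F = X`.
-/

namespace FreeSeries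

variable {N : ℕ} {K : Type*} [CommRing K]

theorem mul_apply (f g : FreeSeries N K) (w : List (Fin N)) :
    (f * g) w = ∑ j ∈ Finset.range (w.length + 1), f (w.take j) * g (w.drop j) := rfl

theorem one_apply (w : List (Fin N)) : (1 : FreeSeries N K) w = if w = [] then 1 else 0 := rfl

instance : Monoid (FreeSeries N K) where
  mul_assoc f g h := funext fun w => by
    have inner : ∀ t ∈ Finset.range (w.length + 1), (f * g) (w.take t) * h (w.drop t) =
        ∑ s ∈ Finset.range (t + 1),
          f (w.take s) * (g ((w.drop s).take (t - s)) * h ((w.drop s).drop (t - s))) := by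
      intro t ht
      rw [Finset.mem_range] at ht
      rw [mul_apply, Finset.sum_mul, List.length_take_of_le (by omega)]
      refine Finset.sum_congr rfl fun s hs => ?_
      rw [Finset.mem_range] at hs
      rw [List.take_take, min_eq_left (by omega), List.drop_take, List.drop_drop,
        Nat.add_sub_cancel' (by omega), mul_assoc]
    rw [mul_apply, Finset.sum_congr rfl inner]
    refine (Finset.sum_range_diag_flip _ fun s u =>
      f (w.take s) * (g ((w.drop s).take u) * h ((w.drop s).drop u))).trans ?_
    rw [mul_apply]
    refine Finset.sum_congr rfl fun s hs => ?_
    rw [Finset.mem_range] at hs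
    rw [mul_apply, Finset.mul_sum, List.length_drop, Nat.sub_add_comm (by omega)]
  one_mul f := funext fun w => by
    rw [mul_apply, Finset.sum_eq_single 0 (fun j _ hj => ?_) (by simp)]
    · simp [one_apply]
    · cases w <;> cases j <;> simp_all [one_apply]
  mul_one f := funext fun w => by
    rw [mul_apply, Finset.sum_eq_single w.length (fun j hj hj' => ?_) (by simp)]
    · simp [one_apply]
    · rw [Finset.mem_range] at hj
      simp [one_apply, List.drop_eq_nil_iff, show ¬ w.length ≤ j by omega]

theorem mul_apply_eq_zero_of_length_lt {f g : FreeSeries N K} {a b : ℕ}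
    (hf : ∀ u : List (Fin N), u.length < a → f u = 0)
    (hg : ∀ v : List (Fin N), v.length < b → g v = 0) {w : List (Fin N)}
    (hw : w.length < a + b) : (f * g) w = 0 := by
  refine Finset.sum_eq_zero fun j hj => ?_
  rw [Finset.mem_range] at hj
  by_cases hja : j < a
  · rw [hf _ (by rw [List.length_take]; omega), zero_mul]
  · rw [hg _ (by rw [List.length_drop]; omega), mul_zero]

theorem list_prod_apply_eq_zero_of_length_lt {L : List (FreeSeries N K)}
    (hL : ∀ f ∈ L, f [] = 0) {w : List (Fin N)} (hw : w.length < L.length) : L.prod w = 0 := by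
  induction L generalizing w with
  | nil => simp at hw
  | cons f L ih =>
    have hf : ∀ u : List (Fin N), u.length < 1 → f u = 0 := fun u hu => by
      rw [List.length_eq_zero_iff.1 (Nat.lt_one_iff.1 hu), hL f List.mem_cons_self]
    exact mul_apply_eq_zero_of_length_lt hf
      (fun v hv => ih (fun g hg => hL g (List.mem_cons_of_mem f hg)) hv)
      (by rw [List.length_cons] at hw; omega)

def X (i : Fin N) : FreeSeries N K := fun w => if w = [i] then 1 else 0

theorem list_prod_map_X_apply (l w : List (Fin N)) :
    (l.map X).prod w = (if w = l then 1 else 0 : K) := by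
  induction l generalizing w with
  | nil => rfl
  | cons c l ih =>
    rw [List.map_cons, List.prod_cons, mul_apply]
    cases w with
    | nil => simp [X]
    | cons a v =>
      rw [Finset.sum_eq_single 1 (fun j hj hj1 => ?_) (by simp)]
      · by_cases hac : a = c <;> simp [X, ih, hac]
      · have : ((a :: v).take j).length ≠ 1 := by
          rw [List.length_take]; simp at hj ⊢; omega
        simp only [X]
        rw [if_neg fun h => this (by rw [h]; rfl), zero_mul]

noncomputable def wordsUpTo (N n : ℕ) : Finset (List (Fin N)) :=
  (List.finite_length_le (Fin N) n).toFinset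

@[simp]
theorem mem_wordsUpTo {n : ℕ} {l : List (Fin N)} : l ∈ wordsUpTo N n ↔ l.length ≤ n := by
  simp [wordsUpTo]

/-- `f(C) = ∑ₗ f l • C l₁ ⋯ C lₖ`, truncated in degree `w` to the words `|l| ≤ |w|`; the
truncation is harmless when the `C c` have no constant term. -/
noncomputable def subst (C : Fin N → FreeSeries N K) (f : FreeSeries N K) : FreeSeries N K :=
  fun w => ∑ l ∈ wordsUpTo N w.length, f l * (l.map C).prod w

theorem subst_apply (C : Fin N → FreeSeries N K) (f : FreeSeries N K) (w : List (Fin N)) :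
    subst C f w = ∑ l ∈ wordsUpTo N w.length, f l * (l.map C).prod w := rfl

theorem fcomp_apply (F C : Fin N → FreeSeries N K) (i : Fin N) (w : List (Fin N)) :
    fcomp F C i w = subst C (F i) w := by
  rw [fcomp, Finset.sum_sigma']
  refine Finset.sum_nbij (fun p => List.ofFn p.2) ?_ ?_ ?_ ?_
  · rintro ⟨j, γ⟩ h
    simpa using h
  · rintro p - q - h
    exact List.ofFn_inj'.1 h
  · intro l hl
    exact ⟨⟨l.length, l.get⟩, by simpa using hl, List.ofFn_get l⟩
  · rintro ⟨j, γ⟩ -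
    rw [List.map_ofFn]
    rfl

variable {C : Fin N → FreeSeries N K}

theorem list_prod_map_apply_eq_zero_of_length_lt (hC : ∀ c, C c [] = 0) {l w : List (Fin N)}
    (hw : w.length < l.length) : (l.map C).prod w = 0 :=
  list_prod_apply_eq_zero_of_length_lt (by simp [hC]) (by rwa [List.length_map])

theorem subst_apply_of_length_le (hC : ∀ c, C c [] = 0) (f : FreeSeries N K)
    {w : List (Fin N)} {n : ℕ} (hn : w.length ≤ n) :
    subst C f w = ∑ l ∈ wordsUpTo N n, f l * (l.map C).prod w := by
  refine Finset.sum_subset (fun l hl => by simp at hl ⊢; omega) fun l _ hl => ?_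
  rw [list_prod_map_apply_eq_zero_of_length_lt hC (by simp at hl ⊢; omega), mul_zero]

theorem sum_wordsUpTo_take_drop {n : ℕ} (φ : List (Fin N) → List (Fin N) → K)
    (hφ : ∀ u v, n < u.length + v.length → φ u v = 0) :
    ∑ l ∈ wordsUpTo N n, ∑ s ∈ Finset.range (l.length + 1), φ (l.take s) (l.drop s) =
      ∑ u ∈ wordsUpTo N n, ∑ v ∈ wordsUpTo N n, φ u v := by
  rw [Finset.sum_sigma', ← Finset.sum_product']
  refine Finset.sum_bij_ne_zero (fun p _ _ => (p.1.take p.2, p.1.drop p.2)) ?_ ?_ ?_ ?_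
  · rintro ⟨l, s⟩ h -
    simp only [Finset.mem_sigma, mem_wordsUpTo] at h
    simp only [Finset.mem_product, mem_wordsUpTo, List.length_take, List.length_drop]
    omega
  · rintro ⟨l, s⟩ h - ⟨l', s'⟩ h' - heq
    simp only [Finset.mem_sigma, Finset.mem_range, Prod.mk.injEq] at h h' heq
    have hs : s = s' := by
      simpa [Nat.min_eq_left (Nat.le_of_lt_succ h.2), Nat.min_eq_left (Nat.le_of_lt_succ h'.2)]
        using congrArg List.length heq.1
    have hl : l = l' := by rw [← List.take_append_drop s l, heq.1, heq.2, List.take_append_drop]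
    rw [hs, hl]
  · rintro ⟨u, v⟩ - hne
    have huv : u.length + v.length ≤ n := by
      by_contra h
      exact hne (hφ u v (by omega))
    exact ⟨⟨u ++ v, u.length⟩, by simpa using huv, by simpa using hne, by simp⟩
  · intros
    rfl

theorem subst_mul (hC : ∀ c, C c [] = 0) (f g : FreeSeries N K) :
    subst C (f * g) = subst C f * subst C g := by
  funext w
  have hP : ∀ u v : List (Fin N), w.length < u.length + v.length →
      ((u.map C).prod * (v.map C).prod) w = 0 := fun u v =>
    mul_apply_eq_zero_of_length_lt (fun _ => list_prod_map_apply_eq_zero_of_length_lt hC)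
      (fun _ => list_prod_map_apply_eq_zero_of_length_lt hC)
  calc subst C (f * g) w
      = ∑ l ∈ wordsUpTo N w.length, ∑ s ∈ Finset.range (l.length + 1),
          f (l.take s) * g (l.drop s) *
            (((l.take s).map C).prod * ((l.drop s).map C).prod) w := by
        refine Finset.sum_congr rfl fun l _ => ?_
        rw [mul_apply, Finset.sum_mul]
        simp_rw [← List.prod_append, ← List.map_append, List.take_append_drop]
    _ = ∑ u ∈ wordsUpTo N w.length, ∑ v ∈ wordsUpTo N w.length,
          f u * g v * ((u.map C).prod * (v.map C).prod) w :=
        sum_wordsUpTo_take_drop (fun u v => f u * g v * ((u.map C).prod * (v.map C).prod) w)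
          fun u v huv => by rw [hP u v huv, mul_zero]
    _ = (subst C f * subst C g) w := by
        rw [mul_apply]
        have hsplit : ∀ t ∈ Finset.range (w.length + 1),
            subst C f (w.take t) * subst C g (w.drop t) =
              ∑ u ∈ wordsUpTo N w.length, ∑ v ∈ wordsUpTo N w.length,
                f u * (u.map C).prod (w.take t) * (g v * (v.map C).prod (w.drop t)) := by
          intro t _
          rw [subst_apply_of_length_le hC f (n := w.length) (by simp),
            subst_apply_of_length_le hC g (n := w.length) (by simp), Finset.sum_mul_sum]
        rw [Finset.sum_congr rfl hsplit, Finset.sum_comm (s := Finset.range _)]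
        refine Finset.sum_congr rfl fun u _ => ?_
        rw [Finset.sum_comm (s := Finset.range _)]
        refine Finset.sum_congr rfl fun v _ => ?_
        rw [mul_apply, Finset.mul_sum]
        exact Finset.sum_congr rfl fun t _ => by ring

theorem subst_one : subst C (1 : FreeSeries N K) = 1 := by
  funext w
  rw [subst, Finset.sum_eq_single [] (fun l _ hl => by simp [one_apply, hl]) (by simp)]
  simp [one_apply]

theorem subst_list_prod (hC : ∀ c, C c [] = 0) (L : List (FreeSeries N K)) :
    subst C L.prod = (L.map (subst C)).prod := by
  induction L with
  | nil => exact subst_one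
  | cons f L ih => rw [List.prod_cons, subst_mul hC, ih, List.map_cons, List.prod_cons]

theorem subst_subst {B : Fin N → FreeSeries N K} (hB : ∀ c, B c [] = 0)
    (hC : ∀ c, C c [] = 0) (f : FreeSeries N K) :
    subst C (subst B f) = subst (fun c => subst C (B c)) f := by
  funext w
  calc subst C (subst B f) w
      = ∑ l ∈ wordsUpTo N w.length, ∑ m ∈ wordsUpTo N w.length,
          f m * (m.map B).prod l * (l.map C).prod w := by
        refine Finset.sum_congr rfl fun l hl => ?_
        rw [subst_apply_of_length_le hB f (mem_wordsUpTo.1 hl), Finset.sum_mul]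
    _ = ∑ m ∈ wordsUpTo N w.length, f m * subst C (m.map B).prod w := by
        rw [Finset.sum_comm]
        simp_rw [subst, Finset.mul_sum, mul_assoc]
    _ = subst (fun c => subst C (B c)) f w := by
        simp_rw [subst_list_prod hC, List.map_map]
        rfl

theorem subst_X (f : FreeSeries N K) : subst X f = f := by
  funext w
  rw [subst, Finset.sum_eq_single w (fun l _ hl => by simp [list_prod_map_X_apply, Ne.symm hl])
    (by simp)]
  simp [list_prod_map_X_apply]

theorem X_subst (hC : ∀ c, C c [] = 0) (i : Fin N) : subst C (X i) = C i := by
  funext w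
  rw [subst_apply_of_length_le hC _ (Nat.le_succ w.length), Finset.sum_eq_single [i]
    (fun l _ hl => by simp [X, hl]) (by simp)]
  simp [X]

theorem subst_apply_of_sub {f g h : FreeSeries N K} (hf : ∀ w, f w = g w - h w)
    (w : List (Fin N)) : subst C f w = subst C g w - subst C h w := by
  simp only [subst, hf, sub_mul, Finset.sum_sub_distrib]

theorem fcomp_eq_subst (F C : Fin N → FreeSeries N K) : fcomp F C = fun i => subst C (F i) :=
  funext fun i => funext (fcomp_apply F C i)

theorem fcomp_eq_X_of_eq_X_add_subst {F H : Fin N → FreeSeries N K} (hC0 : ∀ c, C c [] = 0)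
    (hF : ∀ i w, F i w = X i w - H i w) (hC : ∀ i w, C i w = X i w + subst C (H i) w) :
    fcomp F C = X := by
  funext i w
  rw [fcomp_apply, subst_apply_of_sub (hF i), X_subst hC0, hC, add_sub_cancel_right]

theorem fcomp_eq_X_of_right_inverse {F G G' : Fin N → FreeSeries N K} (hG : ∀ c, G c [] = 0)
    (hG' : ∀ c, G' c [] = 0) (hFG : fcomp F G = X) (hGG' : fcomp G G' = X) :
    fcomp G F = X := by
  have hG'F : G' = F := funext fun i => calc
    G' i = subst G' (X i) := (X_subst hG' i).symm
    _ = subst G' (subst G (F i)) := by rw [← hFG, fcomp_eq_subst]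
    _ = subst (fun c => subst G' (G c)) (F i) := subst_subst hG hG' _
    _ = subst X (F i) := by rw [← hGG', fcomp_eq_subst]
    _ = F i := subst_X _
  rw [← hG'F, hGG']

end FreeSeries

theorem Set.Finite.lists_length_le {α : Type*} {s : Set α} (hs : s.Finite) (n : ℕ) :
    {l : List α | l.length ≤ n ∧ ∀ x ∈ l, x ∈ s}.Finite := by
  have := hs.to_subtype
  refine ((List.finite_length_le s n).image (List.map Subtype.val)).subset ?_
  rintro l ⟨hl, hls⟩
  exact ⟨l.attachWith _ hls, by simpa using hl, by simp⟩

namespace PTree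

variable {N : ℕ}

@[simp]
theorem rootType_leaf (j : Fin N) : (leaf j).rootType = j := rfl

@[simp]
theorem rootType_node (j : Fin N) (ts : List (PTree N)) : (node j ts).rootType = j := rfl

@[simp]
theorem leafWord_leaf (j : Fin N) : (leaf j).leafWord = [j] := by
  rw [leafWord]

@[simp]
theorem leafWord_node (j : Fin N) (ts : List (PTree N)) :
    (node j ts).leafWord = (ts.map leafWord).flatten := by
  rw [leafWord, List.flatMap_def, List.attach_map_val]

@[simp]
theorem proper_leaf (j : Fin N) : (leaf j).Proper := by
  rw [Proper]
  trivial

theorem proper_node {j : Fin N} {ts : List (PTree N)} :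
    (node j ts).Proper ↔ 2 ≤ ts.length ∧ ∀ t ∈ ts, t.Proper := by
  rw [Proper]

@[simp]
theorem energy_leaf {K : Type*} [CommRing K] (H : Fin N → List (Fin N) → K) (j : Fin N) :
    (leaf j).energy H = 1 := by
  rw [energy]

@[simp]
theorem energy_node {K : Type*} [CommRing K] (H : Fin N → List (Fin N) → K) (j : Fin N)
    (ts : List (PTree N)) :
    (node j ts).energy H = H j (ts.map rootType) * (ts.map (energy H)).prod := by
  rw [energy, List.attach_map_val]

theorem leafWord_ne_nil : ∀ {T : PTree N}, T.Proper → T.leafWord ≠ []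
  | leaf _, _ => by simp
  | node _ [], h => by simp [proper_node] at h
  | node _ (t :: _), h => by
    have ht := leafWord_ne_nil ((proper_node.1 h).2 t List.mem_cons_self)
    simp [ht]

theorem length_le_length_flatten {ts : List (PTree N)} (hts : ∀ t ∈ ts, t.Proper) :
    ts.length ≤ (ts.map leafWord).flatten.length := by
  induction ts with
  | nil => simp
  | cons t ts ih =>
    have ht := List.length_pos_iff.2 (leafWord_ne_nil (hts t List.mem_cons_self))
    have := ih fun s hs => hts s (List.mem_cons_of_mem t hs)
    simp only [List.length_cons, List.map_cons, List.flatten_cons, List.length_append]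
    omega

theorem length_leafWord_add_length_le {ts : List (PTree N)} (hts : ∀ t ∈ ts, t.Proper)
    {t : PTree N} (ht : t ∈ ts) :
    t.leafWord.length + ts.length ≤ (ts.map leafWord).flatten.length + 1 := by
  obtain ⟨ts₁, ts₂, rfl⟩ := List.append_of_mem ht
  have h₁ := length_le_length_flatten fun s hs => hts s (List.mem_append_left _ hs)
  have h₂ := length_le_length_flatten fun s hs =>
    hts s (List.mem_append_right _ (List.mem_cons_of_mem t hs))
  simp only [List.map_append, List.map_cons, List.flatten_append, List.flatten_cons,
    List.length_append, List.length_cons]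
  omega

theorem two_le_length_leafWord_node {j : Fin N} {ts : List (PTree N)}
    (h : (node j ts).Proper) : 2 ≤ (node j ts).leafWord.length := by
  rw [leafWord_node]
  exact (proper_node.1 h).1.trans (length_le_length_flatten (proper_node.1 h).2)

/-- The children of a proper node carry strictly shorter sublists of its leaf word, and there are
at most as many children as letters. -/
theorem finite_setOf_proper_leafWord_eq (w : List (Fin N)) :
    {T : PTree N | T.Proper ∧ T.leafWord = w}.Finite := by
  induction w using (measure List.length).wf.induction with
  | _ w ih =>
    let U := ⋃ v ∈ {v : List (Fin N) | v.Sublist w ∧ v.length < w.length},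
      {T : PTree N | T.Proper ∧ T.leafWord = v}
    have hU : U.Finite := by
      refine Set.Finite.biUnion ?_ fun v hv => ih v hv.2
      exact w.sublists.toFinset.finite_toSet.subset fun v hv => by simpa using hv.1
    refine ((Set.finite_range leaf).union
      ((Set.finite_univ.prod (hU.lists_length_le w.length)).image
        fun p => node p.1 p.2)).subset ?_
    rintro (j | ⟨j, ts⟩) ⟨hT, hw⟩
    · exact Or.inl ⟨j, rfl⟩
    · obtain ⟨h2, hts⟩ := proper_node.1 hT
      rw [leafWord_node] at hw
      subst hw
      refine Or.inr ⟨(j, ts), ⟨trivial, length_le_length_flatten hts, fun t ht => ?_⟩, rfl⟩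
      have hlen := length_leafWord_add_length_le hts ht
      simp only [U, Set.mem_iUnion]
      refine ⟨t.leafWord, ⟨?_, ?_⟩, hts t ht, rfl⟩
      · exact List.sublist_flatten_of_mem (List.mem_map_of_mem ht)
      · omega

theorem finite_setOf_forall_proper_flatten_eq (w : List (Fin N)) :
    {ts : List (PTree N) | (∀ t ∈ ts, t.Proper) ∧ (ts.map leafWord).flatten = w}.Finite := by
  let U := ⋃ v ∈ {v : List (Fin N) | v.Sublist w}, {T : PTree N | T.Proper ∧ T.leafWord = v}
  have hU : U.Finite := by
    refine Set.Finite.biUnion ?_ fun v _ => finite_setOf_proper_leafWord_eq v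
    exact w.sublists.toFinset.finite_toSet.subset fun v hv => by simpa using hv
  refine (hU.lists_length_le w.length).subset ?_
  rintro ts ⟨hts, rfl⟩
  refine ⟨length_le_length_flatten hts, fun t ht => ?_⟩
  simp only [U, Set.mem_iUnion]
  exact ⟨t.leafWord, List.sublist_flatten_of_mem (List.mem_map_of_mem ht), hts t ht, rfl⟩

/-- The set `S⃗_{i,w}`. -/
noncomputable def treesWith (i : Fin N) (w : List (Fin N)) : Finset (PTree N) :=
  (finite_setOf_proper_leafWord_eq w).toFinset.filter (·.rootType = i)

@[simp]
theorem mem_treesWith {i : Fin N} {w : List (Fin N)} {T : PTree N} :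
    T ∈ treesWith i w ↔ T.Proper ∧ T.rootType = i ∧ T.leafWord = w := by
  simp only [treesWith, Finset.mem_filter, Set.Finite.mem_toFinset, Set.mem_ofPred_eq]
  tauto

noncomputable def forestsWith (χ w : List (Fin N)) : Finset (List (PTree N)) :=
  (finite_setOf_forall_proper_flatten_eq w).toFinset.filter (·.map rootType = χ)

@[simp]
theorem mem_forestsWith {χ w : List (Fin N)} {ts : List (PTree N)} :
    ts ∈ forestsWith χ w ↔
      (∀ t ∈ ts, t.Proper) ∧ ts.map rootType = χ ∧ (ts.map leafWord).flatten = w := by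
  simp only [forestsWith, Finset.mem_filter, Set.Finite.mem_toFinset, Set.mem_ofPred_eq]
  tauto

theorem forestsWith_nil (w : List (Fin N)) :
    forestsWith [] w = if w = [] then {[]} else ∅ := by
  ext ts
  rw [mem_forestsWith]
  constructor
  · rintro ⟨-, hroot, rfl⟩
    obtain rfl := List.map_eq_nil_iff.1 hroot
    simp
  · intro h
    split_ifs at h <;> simp_all

theorem sum_forestsWith_cons {M : Type*} [AddCommMonoid M] (φ : List (PTree N) → M)
    (c : Fin N) (χ w : List (Fin N)) :
    ∑ ts ∈ forestsWith (c :: χ) w, φ ts =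
      ∑ j ∈ Finset.range (w.length + 1), ∑ T ∈ treesWith c (w.take j),
        ∑ ts ∈ forestsWith χ (w.drop j), φ (T :: ts) := by
  simp_rw [← Finset.sum_product', Finset.sum_sigma']
  symm
  refine Finset.sum_bij (fun p _ => p.2.1 :: p.2.2) ?_ ?_ ?_ fun _ _ => rfl
  · rintro ⟨j, T, ts⟩ h
    simp only [Finset.mem_sigma, Finset.mem_product, mem_treesWith, mem_forestsWith] at h
    obtain ⟨-, ⟨hT, rfl, hTw⟩, hts, rfl, htsw⟩ := h
    exact mem_forestsWith.2 ⟨List.forall_mem_cons.2 ⟨hT, hts⟩, rfl, by simp [hTw, htsw]⟩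
  · rintro ⟨j, T, ts⟩ h ⟨j', T', ts'⟩ h' heq
    simp only [Finset.mem_sigma, Finset.mem_range, Finset.mem_product, mem_treesWith] at h h'
    obtain ⟨rfl, rfl⟩ := List.cons.inj heq
    have hj : j' = j := by
      simpa [h.1, h'.1, Nat.lt_succ_iff.1 h.1, Nat.lt_succ_iff.1 h'.1, h'.2.1.2.2] using
        congrArg List.length h.2.1.2.2
    rw [hj]
  · rintro (_ | ⟨t, ts⟩) h <;> obtain ⟨hts, hroot, hw⟩ := mem_forestsWith.1 h
    · simp at hroot
    · simp only [List.map_cons, List.cons.injEq, List.flatten_cons] at hroot hw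
      refine ⟨⟨t.leafWord.length, t, ts⟩, ?_, rfl⟩
      subst hw
      simp_all

end PTree

section TreeSeries

open FreeSeries PTree

variable {N : ℕ} {K : Type*} [CommRing K]

theorem ptreeSum_eq_sum (H : Fin N → List (Fin N) → K) (i : Fin N) (w : List (Fin N)) :
    ptreeSum H i w = ∑ T ∈ treesWith i w, T.energy H :=
  finsum_cond_eq_sum_of_cond_iff _ fun _ => mem_treesWith.symm

theorem ptreeSum_of_length_le_one (H : Fin N → List (Fin N) → K) {i : Fin N}
    {w : List (Fin N)} (hw : w.length ≤ 1) : ptreeSum H i w = X i w := by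
  have hleaf : ∀ T ∈ treesWith i w, T = leaf i ∧ w = [i] := by
    rintro (j | ⟨j, ts⟩) hT <;> obtain ⟨hp, rfl, rfl⟩ := mem_treesWith.1 hT
    · simp
    · have := two_le_length_leafWord_node hp
      omega
  rw [ptreeSum_eq_sum]
  by_cases h : w = [i]
  · subst h
    rw [Finset.sum_eq_single (leaf i) (fun T hT hne => (hne (hleaf T hT).1).elim)
      fun h => (h (by simp)).elim]
    simp [X]
  · rw [Finset.sum_eq_zero fun T hT => (h (hleaf T hT).2).elim]
    simp [X, h]

/-- `ptreeSum H` viewed as a tuple of free series, so that products of its entries are the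
products of `FreeSeries` and not pointwise products of functions. -/
noncomputable def ptreeSeries (H : Fin N → List (Fin N) → K) : Fin N → FreeSeries N K :=
  ptreeSum H

theorem ptreeSeries_apply (H : Fin N → List (Fin N) → K) (i : Fin N) (w : List (Fin N)) :
    ptreeSeries H i w = ptreeSum H i w := rfl

theorem ptreeSeries_nil (H : Fin N → List (Fin N) → K) (i : Fin N) :
    ptreeSeries H i [] = 0 := by
  rw [ptreeSeries_apply, ptreeSum_of_length_le_one H (by simp)]
  simp [X]

theorem list_prod_map_ptreeSeries_apply (H : Fin N → List (Fin N) → K) (χ w : List (Fin N)) :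
    (χ.map (ptreeSeries H)).prod w = ∑ ts ∈ forestsWith χ w, (ts.map (energy H)).prod := by
  induction χ generalizing w with
  | nil =>
    rw [forestsWith_nil, List.map_nil, List.prod_nil, one_apply]
    split_ifs <;> simp
  | cons c χ ih =>
    rw [List.map_cons, List.prod_cons, mul_apply, sum_forestsWith_cons]
    refine Finset.sum_congr rfl fun j _ => ?_
    simp_rw [ptreeSeries_apply, ptreeSum_eq_sum, ih, Finset.sum_mul_sum, List.map_cons,
      List.prod_cons]

section

variable {H : Fin N → List (Fin N) → K} (hH : ∀ i w, w.length < 2 → H i w = 0)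
include hH

/-- Removing the root of a tree in `S⃗_{i,w}` leaves a proper forest whose word of root types
`l` contributes the factor `H i l`. -/
theorem ptreeSum_eq_subst {i : Fin N} {w : List (Fin N)} (hw : 2 ≤ w.length) :
    ptreeSum H i w = subst (ptreeSeries H) (H i) w := by
  symm
  simp_rw [subst_apply (ptreeSeries H) (H i), list_prod_map_ptreeSeries_apply, Finset.mul_sum]
  rw [Finset.sum_sigma', ptreeSum_eq_sum]
  refine Finset.sum_bij_ne_zero (fun p _ _ => node i p.2) ?_ ?_ ?_ ?_
  · rintro ⟨l, ts⟩ h hne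
    simp only [Finset.mem_sigma, mem_wordsUpTo, mem_forestsWith] at h
    obtain ⟨-, hts, rfl, hflat⟩ := h
    have h2 : 2 ≤ ts.length := by
      by_contra h2
      exact hne (by rw [hH i _ (by simp only [List.length_map]; omega), zero_mul])
    simpa [proper_node, h2] using ⟨hts, hflat⟩
  · rintro ⟨l, ts⟩ h - ⟨l', ts'⟩ h' - heq
    obtain rfl : ts = ts' := (node.inj heq).2
    simp only [Finset.mem_sigma, mem_forestsWith] at h h'
    rw [← h.2.2.1, ← h'.2.2.1]
  · rintro (j | ⟨j, ts⟩) hT hne <;> obtain ⟨hp, rfl, hTw⟩ := mem_treesWith.1 hT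
    · rw [← hTw, leafWord_leaf] at hw
      simp at hw
    · rw [leafWord_node] at hTw
      have hts := (proper_node.1 hp).2
      refine ⟨⟨ts.map rootType, ts⟩, ?_, by simpa using hne, rfl⟩
      refine Finset.mem_sigma.2 ⟨mem_wordsUpTo.2 ?_, mem_forestsWith.2 ⟨hts, rfl, hTw⟩⟩
      simpa [← hTw] using length_le_length_flatten hts
  · rintro ⟨l, ts⟩ h -
    simp only [Finset.mem_sigma, mem_forestsWith] at h
    rw [energy_node, h.2.2.1]

theorem ptreeSeries_eq_X_add_subst (i : Fin N) (w : List (Fin N)) :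
    ptreeSeries H i w = X i w + subst (ptreeSeries H) (H i) w := by
  rcases le_or_gt 2 w.length with hw | hw
  · rw [X, if_neg (by rintro rfl; simp at hw), zero_add]
    exact ptreeSum_eq_subst hH hw
  · rw [subst_apply (ptreeSeries H) (H i),
      Finset.sum_eq_zero fun l hl => by rw [hH i l (by simp at hl; omega), zero_mul],
      add_zero, ptreeSeries_apply, ptreeSum_of_length_le_one H (by omega)]

theorem fcomp_ptreeSeries {F : Fin N → FreeSeries N K} (hF : ∀ i w, F i w = X i w - H i w) :
    fcomp F (ptreeSeries H) = X :=
  fcomp_eq_X_of_eq_X_add_subst (ptreeSeries_nil H) hF (ptreeSeries_eq_X_add_subst hH)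

end

end TreeSeries

/-- if `Fᵢ = Xᵢ - ∑_{k≥2} ∑_{κ ∈ [N]^k} H_{i,κ} X_κ`, then `F` has a two-sided
compositional inverse `G` with `Gᵢ = Xᵢ + ∑_{k≥2} ∑_κ G_{i,κ} X_κ`, where
`G_{i,κ} = ∑_{T ∈ S⃗_{i,κ}} ∏_{v internal} H_{τ(v),μ⃗(v)}`. -/
theorem free_inversion {N : ℕ} {K : Type*} [CommRing K]
    (H : Fin N → List (Fin N) → K) (hH : ∀ i w, w.length < 2 → H i w = 0)
    (F : Fin N → FreeSeries N K)
    (hFdef : ∀ i w, F i w = if w = [i] then 1 else -H i w) :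
    ∃ G : Fin N → FreeSeries N K,
      (∀ i w, G i w =
        if w = [i] then 1 else if 2 ≤ w.length then ptreeSum H i w else 0) ∧
      fcomp F G = (fun i w => if w = [i] then 1 else 0) ∧
      fcomp G F = (fun i w => if w = [i] then 1 else 0) := by
  have hF : ∀ i w, F i w = FreeSeries.X i w - H i w := by
    intro i w
    rw [hFdef, FreeSeries.X]
    split_ifs with h
    · rw [h, hH i [i] (by simp), sub_zero]
    · rw [zero_sub]
  have hFG : fcomp F (ptreeSeries H) = FreeSeries.X := fcomp_ptreeSeries hH hF
  let H' : Fin N → List (Fin N) → K := fun i w => FreeSeries.X i w - ptreeSeries H i w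
  have hGG' : fcomp (ptreeSeries H) (ptreeSeries H') = FreeSeries.X :=
    fcomp_ptreeSeries
      (fun i w hw => sub_eq_zero.2 (ptreeSum_of_length_le_one H (by omega)).symm)
      fun i w => (sub_sub_cancel _ _).symm
  refine ⟨ptreeSeries H, fun i w => ?_, hFG,
    FreeSeries.fcomp_eq_X_of_right_inverse (ptreeSeries_nil H) (ptreeSeries_nil _) hFG hGG'⟩
  rw [ptreeSeries_apply]
  split_ifs with h₁ h₂
  · rw [h₁, ptreeSum_of_length_le_one H (by simp), FreeSeries.X, if_pos rfl]
  · rfl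
  · rw [ptreeSum_of_length_le_one H (by omega), FreeSeries.X, if_neg h₁]
end
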